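/- There is at most one derivation of any judgment of the form Γ ⊢ps or Γ ⊢ps x : A. -/
import Mathlib


/-- Variables of the globular type theory. -/
abbrev Var := ℕ

/-- Terms of the globular type theory are just variables. -/
abbrev Tm := Var

/-- Types: either `Obj` or `Hom_A(t,u)`. -/
inductive Ty : Type where
  | obj : Ty
  | hom : Ty → Tm → Tm → Ty
deriving DecidableEq

/-- Contexts: lists of variable/type pairs.  The head of the list is the
most recently declared variable, i.e. the list `[(xₙ,Aₙ), …, (x₁,A₁)]`
represents the context `x₁:A₁, …, xₙ:Aₙ`. -/
abbrev Ctx := List (Var × Ty)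

/-- Substitutions: lists of terms (head = term for the most recent variable). -/
abbrev Subst := List Tm

/-- Free variables of a type. -/
def Ty.fv : Ty → Finset Var
  | .obj => ∅
  | .hom A t u => A.fv ∪ {t} ∪ {u}

/-- Free variables of a context. -/
def Ctx.fv : Ctx → Finset Var
  | [] => ∅
  | (x, A) :: Γ => Ctx.fv Γ ∪ {x} ∪ A.fv

/-- Action of a substitution for the context `Γ` on a variable: the `i`-th
variable of `Γ` is sent to the `i`-th term of `σ`. -/
def substVar : Ctx → Subst → Tm → Tm
  | (y, _) :: Γ, t :: σ, x => if x = y then t else substVar Γ σ x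
  | _, _, x => x

/-- Action of a substitution on a type. -/
def Ty.subst : Ty → Ctx → Subst → Ty
  | .obj, _, _ => .obj
  | .hom A t u, Γ, σ => .hom (A.subst Γ σ) (substVar Γ σ t) (substVar Γ σ u)

/-- Derivations of the judgment `Γ ⊢ps x : A` (`Γ` is a partial pasting scheme
with dangling output `x : A`). -/
inductive PsvD : Ctx → Var → Ty → Type where
  | start (x : Var) : PsvD [(x, Ty.obj)] x Ty.obj
  | ext {Γ : Ctx} {x : Var} {A : Ty} (y f : Var) :
      PsvD Γ x A → y ∉ Ctx.fv Γ → f ∉ Ctx.fv Γ → f ≠ y →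
      PsvD ((f, Ty.hom A x y) :: (y, A) :: Γ) f (Ty.hom A x y)
  | drop {Γ : Ctx} {f x y : Var} {A : Ty} :
      PsvD Γ f (Ty.hom A x y) → PsvD Γ y A

/-- Derivations of the judgment `Γ ⊢ps` (`Γ` is a pasting scheme):
obtained from a derivation of `Γ ⊢ps x : Obj`. -/
inductive PsD : Ctx → Type where
  | done {Γ : Ctx} {x : Var} : PsvD Γ x Ty.obj → PsD Γ


/-- Dimension of a type. -/
def Ty.dim : Ty → ℕ
  | .obj => 0
  | .hom A _ _ => A.dim + 1

/-- Any derivable type has dimension at most that of the head type. -/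
theorem PsvD.dimLe {Γ x A} (d : PsvD Γ x A) :
    ∀ {f B Γt}, Γ = (f, B) :: Γt → A.dim ≤ B.dim := by
  induction d with
  | start z => intro f B Γt h; cases h; exact le_refl _
  | ext y f e hy hf hfy ih => intro g B Γt h; cases h; exact le_refl _
  | drop e ih =>
    intro g B Γt h
    have := ih h
    simp [Ty.dim] at this
    omega

/-- The derivable judgment in a context is determined by the dimension of
its type. -/
theorem PsvD.dimDet {Γ x A} (d : PsvD Γ x A) :
    ∀ {x' A'}, PsvD Γ x' A' → A.dim = A'.dim → x = x' ∧ A = A' := by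
  induction d with
  | start z =>
    intro x' A' d' hd
    cases d' with
    | start => exact ⟨rfl, rfl⟩
    | drop e' =>
      have := e'.dimLe rfl
      simp [Ty.dim] at this hd

  | ext y f e hy hf hfy ih =>
    intro x' A' d' hd
    cases d' with
    | ext y' f' e' hy' hf' hfy' => exact ⟨rfl, rfl⟩
    | drop e' =>
      have := e'.dimLe rfl
      simp [Ty.dim] at this hd
      omega
  | drop e ih =>
    intro x' A' d' hd
    cases d' with
    | start =>
      have := e.dimLe rfl
      simp [Ty.dim] at this hd

    | ext y' f' e' hy' hf' hfy' =>
      have := e.dimLe rfl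
      simp [Ty.dim] at this hd
      omega
    | drop e' =>
      obtain ⟨h1, h2⟩ := ih e' (by simp [Ty.dim]; omega)
      injection h2 with hA hx hy
      exact ⟨hy.symm ▸ rfl, hA ▸ rfl⟩

/-- Uniqueness of derivations of `Γ ⊢ps x : A`. -/
theorem PsvD.uniq : ∀ {Γ x A} (d d' : PsvD Γ x A), d = d' := by
  intro Γ x A d
  induction d with
  | start z =>
    intro d'
    cases d' with
    | start => rfl
    | drop e' =>
      have := e'.dimLe rfl
      simp [Ty.dim] at this
  | ext y f e hy hf hfy ih =>
    intro d'
    cases d' with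
    | ext y' f' e' hy' hf' hfy' => cases ih e'; rfl
    | drop e' =>
      have := e'.dimLe rfl
      simp [Ty.dim] at this
  | drop e ih =>
    intro d'
    cases d' with
    | start =>
      have := e.dimLe rfl
      simp [Ty.dim] at this
    | ext y' f' e' hy' hf' hfy' =>
      have := e.dimLe rfl
      simp [Ty.dim] at this
    | drop e' =>
      obtain ⟨h1, h2⟩ := e.dimDet e' rfl
      injection h2 with hA hx hy
      cases h1; cases hx
      exact congrArg PsvD.drop (ih e')

/-- There is at most one derivation of any judgment of the form `Γ ⊢ps` or
`Γ ⊢ps x : A`. -/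
theorem ps_derivation_unique :
    (∀ Γ : Ctx, Subsingleton (PsD Γ)) ∧
    (∀ (Γ : Ctx) (x : Var) (A : Ty), Subsingleton (PsvD Γ x A)) := by
  constructor
  · intro Γ
    constructor
    rintro ⟨d⟩ ⟨d'⟩
    obtain ⟨h1, -⟩ := d.dimDet d' rfl
    cases h1
    cases d.uniq d'
    rfl
  · intro Γ x A
    exact ⟨PsvD.uniq⟩
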